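/- arXiv:2004.14359 — 3 statements merged into one kernel-verified Lean document; each statement's English description precedes it below -/
import Mathlib

section
/- Every KKPS field u(p)=A(q(p))Jp+B(q(p))J'p is localizable: D(|u|²)(p)[u(p)] = 0 for all p∈S³. Moreover, on S³ one has |u|²(p) = A(q)² + B(q)² + 2(2q−1)A(q)B(q) with q = q(p), and the first integral property Dq(p)[u(p)] = 0 holds for all p∈S³. -/
open RealInnerProductSpace

noncomputable section

/-- ℝ⁴ with coordinates (x₁,y₁,x₂,y₂) and the Euclidean inner product; S³ is the set
of `p` with `‖p‖ = 1`. -/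
abbrev E4 := EuclideanSpace ℝ (Fin 4)

/-- The linear map `J(x₁,y₁,x₂,y₂) = (−y₁,x₁,−y₂,x₂)`; its restriction to S³ is the
Hopf field ξ. -/
def Jm (p : E4) : E4 := WithLp.toLp 2 ![-p 1, p 0, -p 3, p 2]

/-- The linear map `J'(x₁,y₁,x₂,y₂) = (−y₁,x₁,y₂,−x₂)`; its restriction to S³ is the
anti-Hopf field ξ'. -/
def Jm' (p : E4) : E4 := WithLp.toLp 2 ![-p 1, p 0, p 3, -p 2]

/-- The frame field `X₁(p) = (−x₂,y₂,x₁,−y₁)`. -/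
def X1 (p : E4) : E4 := WithLp.toLp 2 ![-p 2, p 3, p 0, -p 1]

/-- The frame field `X₂(p) = (−y₂,−x₂,y₁,x₁)`. -/
def X2 (p : E4) : E4 := WithLp.toLp 2 ![-p 3, -p 2, p 1, p 0]

/-- Orthogonal projection onto the tangent space of S³ at `p`: `P_p(v) = v − ⟨p,v⟩p`. -/
def Pt (p v : E4) : E4 := v - ⟪p, v⟫ • p

/-- A (smooth) tangent field on S³: a smooth map `u : ℝ⁴ → ℝ⁴` with `⟨p, u p⟩ = 0`
for every `p ∈ S³`. -/
def IsTangentField (u : E4 → E4) : Prop :=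
  ContDiff ℝ (⊤ : ℕ∞) u ∧ ∀ p : E4, ‖p‖ = 1 → ⟪p, u p⟫ = 0

/-- Levi-Civita covariant derivative of the round metric: `(∇_u v)(p) = P_p(Dv(p)[u(p)])`. -/
def scov (u v : E4 → E4) (p : E4) : E4 := Pt p (fderiv ℝ v p (u p))

/-- Spherical gradient: `(grad f)(p) = P_p(∇f(p))`. -/
def sgrad (f : E4 → ℝ) (p : E4) : E4 := Pt p (gradient f p)

/-- Spherical divergence: `(div u)(p) = tr(Du(p)) − ⟨Du(p)[p], p⟩`. -/
def sdiv (u : E4 → E4) (p : E4) : ℝ :=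
  LinearMap.trace ℝ E4 (fderiv ℝ u p).toLinearMap - ⟪fderiv ℝ u p p, p⟫

/-- Spherical Laplacian with geometers' sign: `Δf = −div (grad f)`. -/
def slap (f : E4 → ℝ) (p : E4) : ℝ := - sdiv (sgrad f) p

/-- The transverse complex structure of the standard Sasakian structure on S³:
`φ_p(v) = Jv + ⟨v, Jp⟩p`. -/
def phiT (p v : E4) : E4 := Jm v + ⟪v, Jm p⟫ • p

/-- `u` is a steady Euler field on S³ with pressure `pr`: `div u = 0` on S³ and
`(∇_u u)(p) = −(grad pr)(p)` for all `p ∈ S³`. -/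
def IsSteadyEulerWithPressure (u : E4 → E4) (pr : E4 → ℝ) : Prop :=
  ∀ p : E4, ‖p‖ = 1 → sdiv u p = 0 ∧ scov u u p = - sgrad pr p

/-- `u` is a steady Euler field on S³, for some smooth pressure. -/
def IsSteadyEuler (u : E4 → E4) : Prop :=
  ∃ pr : E4 → ℝ, ContDiff ℝ (⊤ : ℕ∞) pr ∧ IsSteadyEulerWithPressure u pr

/-- A tangent field `u` is localizable if `D(|u|²)(p)[u(p)] = 0` for all `p ∈ S³`. -/
def IsLocalizable (u : E4 → E4) : Prop :=
  ∀ p : E4, ‖p‖ = 1 → fderiv ℝ (fun q => ⟪u q, u q⟫) p (u p) = 0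

/-- The function `q(p) = x₁² + y₁²`. -/
def qf (p : E4) : ℝ := p 0 ^ 2 + p 1 ^ 2

/-- The KKPS family: `u(p) = A(q(p))·Jp + B(q(p))·J'p`. -/
def kkps (A B : ℝ → ℝ) (p : E4) : E4 := A (qf p) • Jm p + B (qf p) • Jm' p

/-- Determinant of four vectors in ℝ⁴ (given as rows). -/
def det4 (a b c d : E4) : ℝ :=
  Matrix.det (Matrix.of ![(fun i => a i), (fun i => b i), (fun i => c i), (fun i => d i)])

/-- Cross product of tangent vectors at `p ∈ S³`: `⟨v ×_p w, z⟩ = det(p,v,w,z)`. -/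
def crossS (p v w : E4) : E4 := WithLp.toLp 2 (fun i => det4 p v w (WithLp.toLp 2 (Pi.single i 1)))

/-- `c` is the curl of the tangent field `u` on S³: `c` is a tangent field such that
`⟨(∇_v u)(p), w⟩ − ⟨(∇_w u)(p), v⟩ = ⟨c(p), v ×_p w⟩` for all tangent `v, w` at `p ∈ S³`
(with the orientation convention given by `det4`, for which `curl ξ = 2ξ`). -/
def IsCurlOf (u c : E4 → E4) : Prop :=
  IsTangentField c ∧
  ∀ p : E4, ‖p‖ = 1 → ∀ v w : E4, ⟪p, v⟫ = 0 → ⟪p, w⟫ = 0 →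
    ⟪Pt p (fderiv ℝ u p v), w⟫ - ⟪Pt p (fderiv ℝ u p w), v⟫ = ⟪c p, crossS p v w⟫

/-- The Sasakian KKPS ansatz on S³: `u(p) = F(ψ(p))·Jp + φ_p((grad (G∘ψ))(p))`. -/
def ansatz (ψ : E4 → ℝ) (F G : ℝ → ℝ) (p : E4) : E4 :=
  F (ψ p) • Jm p + phiT p (sgrad (fun q => G (ψ q)) p)

/-- The quartic polynomial `ψ_a`, a deformation of Nomizu's isoparametric polynomial. -/
def ψa (a : ℝ) (p : E4) : ℝ :=
  (1/2) * ((p 0 ^ 2 + p 1 ^ 2 + p 2 ^ 2 + p 3 ^ 2) ^ 2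
      + (p 0 ^ 2 + p 1 ^ 2 - p 2 ^ 2 - p 3 ^ 2) ^ 2)
    + 2 * a * ((p 0 ^ 2 - p 1 ^ 2) * (p 2 ^ 2 - p 3 ^ 2) + 4 * p 0 * p 1 * p 2 * p 3)

/-- The field `u_a(p) = F(ψ_a(p))·Jp + φ_p((grad ψ_a)(p))`. -/
def nomizuField (a : ℝ) (F : ℝ → ℝ) (p : E4) : E4 :=
  F (ψa a p) • Jm p + phiT p (sgrad (ψa a) p)

/-- The field `u(p) = 2a₁(x₁y₂+y₁x₂)·X₁(p) + 2a₂(x₁x₂−y₁y₂)·X₂(p)`. -/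
def abField (a₁ a₂ : ℝ) (p : E4) : E4 :=
  (2 * a₁ * (p 0 * p 3 + p 1 * p 2)) • X1 p + (2 * a₂ * (p 0 * p 2 - p 1 * p 3)) • X2 p

/-! `J` and `J'` are skew and both rotate the `(x₁, y₁)`-plane, so `q` and `|p|²` are first
integrals of every KKPS field `u`. Since `|Jp| = |J'p| = |p|` and `⟨Jp, J'p⟩ = 2q − |p|²`, the
function `|u|²` is a smooth function of these two first integrals, hence itself a first integral. -/

theorem fderiv_comp_prodMk_apply_eq_zero {𝕜 E F₁ F₂ G : Type*} [NontriviallyNormedField 𝕜]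
    [NormedAddCommGroup E] [NormedSpace 𝕜 E] [NormedAddCommGroup F₁] [NormedSpace 𝕜 F₁]
    [NormedAddCommGroup F₂] [NormedSpace 𝕜 F₂] [NormedAddCommGroup G] [NormedSpace 𝕜 G]
    {f₁ : E → F₁} {f₂ : E → F₂} {H : F₁ × F₂ → G} {x v : E}
    (hf₁ : DifferentiableAt 𝕜 f₁ x) (hf₂ : DifferentiableAt 𝕜 f₂ x)
    (hH : DifferentiableAt 𝕜 H (f₁ x, f₂ x))
    (hf₁v : fderiv 𝕜 f₁ x v = 0) (hf₂v : fderiv 𝕜 f₂ x v = 0) :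
    fderiv 𝕜 (fun z => H (f₁ z, f₂ z)) x v = 0 := by
  have hpair : fderiv 𝕜 (fun z => (f₁ z, f₂ z)) x v = 0 := by
    rw [hf₁.fderiv_prodMk hf₂, ContinuousLinearMap.prod_apply, hf₁v, hf₂v, Prod.mk_zero_zero]
  change fderiv 𝕜 (H ∘ fun z => (f₁ z, f₂ z)) x v = 0
  rw [fderiv_comp x hH (hf₁.prodMk hf₂), ContinuousLinearMap.comp_apply, hpair, map_zero]

section Hopf

variable (p : E4)

theorem inner_self_Jm : ⟪p, Jm p⟫ = 0 := by
  simp only [Jm, PiLp.inner_apply, RCLike.inner_apply, Real.ringHom_apply,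
    Fin.sum_univ_four, Matrix.cons_val_zero, Matrix.cons_val_one, Matrix.cons_val]
  ring

theorem inner_self_Jm' : ⟪p, Jm' p⟫ = 0 := by
  simp only [Jm', PiLp.inner_apply, RCLike.inner_apply, Real.ringHom_apply,
    Fin.sum_univ_four, Matrix.cons_val_zero, Matrix.cons_val_one, Matrix.cons_val]
  ring

theorem norm_Jm : ‖Jm p‖ = ‖p‖ := by
  simp only [Jm, EuclideanSpace.norm_eq, Real.norm_eq_abs, sq_abs, Fin.sum_univ_four,
    Matrix.cons_val_zero, Matrix.cons_val_one, Matrix.cons_val]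
  ring_nf

theorem norm_Jm' : ‖Jm' p‖ = ‖p‖ := by
  simp only [Jm', EuclideanSpace.norm_eq, Real.norm_eq_abs, sq_abs, Fin.sum_univ_four,
    Matrix.cons_val_zero, Matrix.cons_val_one, Matrix.cons_val]
  ring_nf

theorem inner_Jm_Jm' : ⟪Jm p, Jm' p⟫ = 2 * qf p - ‖p‖ ^ 2 := by
  simp only [Jm, Jm', qf, PiLp.inner_apply, RCLike.inner_apply, Real.ringHom_apply,
    Fin.sum_univ_four, EuclideanSpace.norm_sq_eq, Real.norm_eq_abs, sq_abs, Matrix.cons_val_one,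
    Matrix.cons_val]
  ring

theorem hasFDerivAt_qf :
    HasFDerivAt qf ((2 * p 0) • EuclideanSpace.proj (𝕜 := ℝ) 0 +
      (2 * p 1) • EuclideanSpace.proj (𝕜 := ℝ) 1) p := by
  have hproj (i : Fin 4) : HasFDerivAt (fun z : E4 => z i) (EuclideanSpace.proj (𝕜 := ℝ) i) p :=
    PiLp.hasFDerivAt_apply 2 p i
  refine (((hproj 0).pow 2).add ((hproj 1).pow 2)).congr_fderiv ?_
  norm_num

end Hopf

section KKPS

variable (A B : ℝ → ℝ) (p : E4)

theorem inner_self_kkps : ⟪p, kkps A B p⟫ = 0 := by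
  simp only [kkps, inner_add_right, inner_smul_right, inner_self_Jm, inner_self_Jm', mul_zero,
    add_zero]

theorem norm_kkps_sq : ‖kkps A B p‖ ^ 2 =
    (A (qf p) ^ 2 + B (qf p) ^ 2) * ‖p‖ ^ 2 + 2 * A (qf p) * B (qf p) * (2 * qf p - ‖p‖ ^ 2) := by
  rw [kkps, norm_add_sq_real, norm_smul, norm_smul, inner_smul_left, inner_smul_right,
    inner_Jm_Jm', norm_Jm, norm_Jm', mul_pow, mul_pow, Real.norm_eq_abs, Real.norm_eq_abs, sq_abs,
    sq_abs, conj_trivial]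
  ring

theorem fderiv_qf_kkps : fderiv ℝ qf p (kkps A B p) = 0 := by
  simp only [(hasFDerivAt_qf p).fderiv, kkps, Jm, Jm', add_apply, smul_apply, PiLp.proj_apply,
    PiLp.add_apply, PiLp.smul_apply, Matrix.cons_val_zero, Matrix.cons_val_one, smul_eq_mul]
  ring

theorem fderiv_norm_sq_kkps : fderiv ℝ (fun z : E4 => ‖z‖ ^ 2) p (kkps A B p) = 0 := by
  rw [fderiv_norm_sq_apply, smul_apply, innerSL_apply_apply, inner_self_kkps, smul_zero]

end KKPS

theorem isLocalizable_kkps {A B : ℝ → ℝ} (hA : Differentiable ℝ A) (hB : Differentiable ℝ B) :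
    IsLocalizable (kkps A B) := by
  intro p _
  have h := fderiv_comp_prodMk_apply_eq_zero
    (H := fun st : ℝ × ℝ =>
      (A st.1 ^ 2 + B st.1 ^ 2) * st.2 + 2 * A st.1 * B st.1 * (2 * st.1 - st.2))
    (f₂ := fun z : E4 => ‖z‖ ^ 2) (hasFDerivAt_qf p).differentiableAt
    (differentiableAt_id.norm_sq ℝ) (by fun_prop)
    (fderiv_qf_kkps A B p) (fderiv_norm_sq_kkps A B p)
  simpa only [← norm_kkps_sq, real_inner_self_eq_norm_sq] using h

/-- every KKPS field is localizable; moreover on S³ one has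
`|u|² = A(q)² + B(q)² + 2(2q−1)A(q)B(q)` and `Dq(p)[u(p)] = 0`. -/
theorem statement5 (A B : ℝ → ℝ) (hA : ContDiff ℝ (⊤ : ℕ∞) A) (hB : ContDiff ℝ (⊤ : ℕ∞) B) :
    IsLocalizable (kkps A B) ∧
    (∀ p : E4, ‖p‖ = 1 →
      ⟪kkps A B p, kkps A B p⟫
        = A (qf p) ^ 2 + B (qf p) ^ 2 + 2 * (2 * qf p - 1) * A (qf p) * B (qf p)) ∧
    (∀ p : E4, ‖p‖ = 1 → fderiv ℝ qf p (kkps A B p) = 0) := by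
  refine ⟨isLocalizable_kkps (hA.differentiable (by simp)) (hB.differentiable (by simp)),
    fun p hp => ?_, fun p _ => fderiv_qf_kkps A B p⟩
  rw [real_inner_self_eq_norm_sq, norm_kkps_sq, hp]
  ring
end
end

section
/- The linear map Ψ(x₁,y₁,x₂,y₂) = (1/√2)·(x₁+y₂, y₁−x₂, y₁+x₂, −x₁+y₂) of ℝ⁴ is orthogonal (Ψ ∈ O(4)), commutes with J (Ψ∘J = J∘Ψ, so it preserves the Hopf field), and pulls Nomizu's polynomial back to a Cartan–Münzer polynomial of degree 2: ψ_N(Ψ(x)) = 4(x₁²+y₁²)(x₂²+y₂²) for all x ∈ ℝ⁴. -/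
open RealInnerProductSpace

noncomputable section

/-- The linear map `Ψ(x₁,y₁,x₂,y₂) = (1/√2)(x₁+y₂, y₁−x₂, y₁+x₂, −x₁+y₂)`. -/
def ΨL (p : E4) : E4 :=
  (Real.sqrt 2)⁻¹ • (WithLp.toLp 2 ![p 0 + p 3, p 1 - p 2, p 1 + p 2, -p 0 + p 3] : E4)

/-- Nomizu's polynomial `ψ_N(x₁,y₁,x₂,y₂) = (x₁²+x₂²−y₁²−y₂²)² + 4(x₁y₁+x₂y₂)²`. -/
def ψN (p : E4) : ℝ :=
  (p 0 ^ 2 + p 2 ^ 2 - p 1 ^ 2 - p 3 ^ 2) ^ 2 + 4 * (p 0 * p 1 + p 2 * p 3) ^ 2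

/-! Identify ℝ⁴ with ℂ² via `z₁ = x₁ + i y₁`, `z₂ = x₂ + i y₂`. Then `J` is multiplication by `i`,
`ψ_N = |z₁² + z₂²|²`, and `Ψ(z₁, z₂) = (z₁ − i z₂, z₂ − i z₁)/√2` is a unitary ℂ-linear map, hence
orthogonal and commuting with `J`. Moreover `(z₁ − i z₂)² + (z₂ − i z₁)² = −4i z₁z₂`, so
`ψ_N ∘ Ψ = |−2i z₁z₂|² = 4|z₁|²|z₂|²`. In real coordinates every claim is a polynomial identity
once `(√2)⁻¹ · (√2)⁻¹ = 1/2` is available. -/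

@[simp] lemma ΨL_apply_zero (p : E4) : ΨL p 0 = (√2)⁻¹ * (p 0 + p 3) := rfl
@[simp] lemma ΨL_apply_one (p : E4) : ΨL p 1 = (√2)⁻¹ * (p 1 - p 2) := rfl
@[simp] lemma ΨL_apply_two (p : E4) : ΨL p 2 = (√2)⁻¹ * (p 1 + p 2) := rfl
@[simp] lemma ΨL_apply_three (p : E4) : ΨL p 3 = (√2)⁻¹ * (-p 0 + p 3) := rfl

@[simp] lemma Jm_apply_zero (p : E4) : Jm p 0 = -p 1 := rfl
@[simp] lemma Jm_apply_one (p : E4) : Jm p 1 = p 0 := rfl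
@[simp] lemma Jm_apply_two (p : E4) : Jm p 2 = -p 3 := rfl
@[simp] lemma Jm_apply_three (p : E4) : Jm p 3 = p 2 := rfl

lemma E4.inner_eq_sum (x y : E4) : ⟪x, y⟫ = x 0 * y 0 + x 1 * y 1 + x 2 * y 2 + x 3 * y 3 := by
  simp only [PiLp.inner_apply, RCLike.inner_apply, conj_trivial, Fin.sum_univ_four]
  ring

lemma isLinearMap_ΨL : IsLinearMap ℝ ΨL where
  map_add x y := by ext i; fin_cases i <;> simp <;> ring
  map_smul c x := by ext i; fin_cases i <;> simp <;> ring

lemma inner_ΨL_ΨL (x y : E4) : ⟪ΨL x, ΨL y⟫ = ⟪x, y⟫ := by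
  simp only [E4.inner_eq_sum, ΨL_apply_zero, ΨL_apply_one, ΨL_apply_two, ΨL_apply_three]
  linear_combination (2 * (x 0 * y 0 + x 1 * y 1 + x 2 * y 2 + x 3 * y 3)) *
    TsirelsonInequality.sqrt_two_inv_mul_self

lemma ΨL_Jm (x : E4) : ΨL (Jm x) = Jm (ΨL x) := by
  ext i; fin_cases i <;> simp <;> ring

lemma ψN_ΨL (x : E4) : ψN (ΨL x) = 4 * (x 0 ^ 2 + x 1 ^ 2) * (x 2 ^ 2 + x 3 ^ 2) := by
  simp only [ψN, ΨL_apply_zero, ΨL_apply_one, ΨL_apply_two, ΨL_apply_three]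
  linear_combination (16 * (x 0 ^ 2 + x 1 ^ 2) * (x 2 ^ 2 + x 3 ^ 2) *
      ((√2)⁻¹ * (√2)⁻¹ + 2⁻¹)) * TsirelsonInequality.sqrt_two_inv_mul_self

/-- `Ψ` is linear and orthogonal, commutes with `J` (hence preserves the
Hopf field), and pulls Nomizu's polynomial back to `4(x₁²+y₁²)(x₂²+y₂²)`. -/
theorem statement13 :
    IsLinearMap ℝ ΨL ∧
    (∀ x y : E4, ⟪ΨL x, ΨL y⟫ = ⟪x, y⟫) ∧
    (∀ x : E4, ΨL (Jm x) = Jm (ΨL x)) ∧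
    (∀ x : E4, ψN (ΨL x) = 4 * (x 0 ^ 2 + x 1 ^ 2) * (x 2 ^ 2 + x 3 ^ 2)) :=
  ⟨isLinearMap_ΨL, inner_ΨL_ΨL, ΨL_Jm, ψN_ΨL⟩
end
end

section
/- Let u(p) = 2a₁(x₁y₂+y₁x₂)X₁(p) + 2a₂(x₁x₂−y₁y₂)X₂(p). If a₁ = a₂ then u is a strong Beltrami field with eigenvalue 4: (curl u)(p) = 4·u(p) for all p∈S³. Conversely, if (a₁,a₂) ≠ (0,0) and there exists a smooth function θ on S³ with (curl u)(p) = θ(p)·u(p) for all p∈S³, then a₁ = a₂. -/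
open RealInnerProductSpace

noncomputable section

/-! Since `X₁ ×ₚ X₂ = ξ`, `X₂ ×ₚ ξ = X₁` and `ξ ×ₚ X₁ = X₂` on S³, the components of a curl in
the orthonormal frame `{ξ, X₁, X₂}` are `d(u♭)(X₁, X₂)`, `d(u♭)(X₂, ξ)` and `d(u♭)(ξ, X₁)`.
For our `u` these give
`curl u = 2(a₁ − a₂)(x₂² + y₂² − x₁² − y₁²) ξ`
`         + 4(a₁ + a₂)(x₁y₂ + y₁x₂) X₁ + 4(a₁ + a₂)(x₁x₂ − y₁y₂) X₂`,
which is `4u` when `a₁ = a₂`. Conversely, at `p = (1, 0, 0, 0)` the field `u` vanishes while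
`curl u = 2(a₂ − a₁) ξ`, so `curl u = θ u` forces `a₁ = a₂`. -/

namespace E4

theorem inner_eq (x y : E4) : ⟪x, y⟫ = x 0 * y 0 + x 1 * y 1 + x 2 * y 2 + x 3 * y 3 := by
  simp only [PiLp.inner_apply, Fin.sum_univ_four, RCLike.inner_apply, conj_trivial]
  ring

theorem sum_sq_eq_one {p : E4} (hp : ‖p‖ = 1) : p 0 ^ 2 + p 1 ^ 2 + p 2 ^ 2 + p 3 ^ 2 = 1 := by
  have h := real_inner_self_eq_norm_sq p
  rw [hp, inner_eq] at h
  linear_combination h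

end E4

open E4

theorem inner_Jm_self (p : E4) : ⟪p, Jm p⟫ = 0 := by
  simp [inner_eq, Jm]; ring

theorem inner_X1_self (p : E4) : ⟪p, X1 p⟫ = 0 := by
  simp [inner_eq, X1]; ring

theorem inner_X2_self (p : E4) : ⟪p, X2 p⟫ = 0 := by
  simp [inner_eq, X2]; ring

theorem eq_sum_inner_smul_frame {p : E4} (hp : ‖p‖ = 1) (x : E4) :
    x = ⟪x, p⟫ • p + ⟪x, Jm p⟫ • Jm p + ⟪x, X1 p⟫ • X1 p + ⟪x, X2 p⟫ • X2 p := by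
  conv_lhs => rw [← one_smul ℝ x, ← sum_sq_eq_one hp]
  ext i
  fin_cases i <;> simp [inner_eq, Jm, X1, X2] <;> ring

theorem inner_Pt_of_inner_eq_zero {p w : E4} (hw : ⟪p, w⟫ = 0) (v : E4) :
    ⟪Pt p v, w⟫ = ⟪v, w⟫ := by
  rw [Pt, inner_sub_left, inner_smul_left, real_inner_comm w, hw, mul_zero, sub_zero]

theorem crossS_X1_X2 {p : E4} (hp : ‖p‖ = 1) : crossS p (X1 p) (X2 p) = Jm p := by
  conv_rhs => rw [← one_smul ℝ (Jm p), ← sum_sq_eq_one hp]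
  ext i
  fin_cases i <;> simp [crossS, det4, Matrix.det_succ_row_zero, Fin.sum_univ_succ,
    Fin.succAbove, Pi.single_apply, Jm, X1, X2] <;> ring

theorem crossS_X2_Jm {p : E4} (hp : ‖p‖ = 1) : crossS p (X2 p) (Jm p) = X1 p := by
  conv_rhs => rw [← one_smul ℝ (X1 p), ← sum_sq_eq_one hp]
  ext i
  fin_cases i <;> simp [crossS, det4, Matrix.det_succ_row_zero, Fin.sum_univ_succ,
    Fin.succAbove, Pi.single_apply, Jm, X1, X2] <;> ring

theorem crossS_Jm_X1 {p : E4} (hp : ‖p‖ = 1) : crossS p (Jm p) (X1 p) = X2 p := by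
  conv_rhs => rw [← one_smul ℝ (X2 p), ← sum_sq_eq_one hp]
  ext i
  fin_cases i <;> simp [crossS, det4, Matrix.det_succ_row_zero, Fin.sum_univ_succ,
    Fin.succAbove, Pi.single_apply, Jm, X1, X2] <;> ring

/-- `d(u♭)_p(v, w)`: for tangent `v, w` this is the left-hand side of the identity defining
`IsCurlOf`. -/
def dFlat (u : E4 → E4) (p v w : E4) : ℝ := ⟪fderiv ℝ u p v, w⟫ - ⟪fderiv ℝ u p w, v⟫

theorem IsCurlOf.eq_frame {u c : E4 → E4} (hc : IsCurlOf u c) {p : E4} (hp : ‖p‖ = 1) :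
    c p = dFlat u p (X1 p) (X2 p) • Jm p + dFlat u p (X2 p) (Jm p) • X1 p
      + dFlat u p (Jm p) (X1 p) • X2 p := by
  have hdFlat (v w : E4) (hv : ⟪p, v⟫ = 0) (hw : ⟪p, w⟫ = 0) :
      dFlat u p v w = ⟪c p, crossS p v w⟫ := by
    rw [← hc.2 p hp v w hv hw, inner_Pt_of_inner_eq_zero hw, inner_Pt_of_inner_eq_zero hv, dFlat]
  rw [hdFlat _ _ (inner_X1_self p) (inner_X2_self p), crossS_X1_X2 hp,
    hdFlat _ _ (inner_X2_self p) (inner_Jm_self p), crossS_X2_Jm hp,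
    hdFlat _ _ (inner_Jm_self p) (inner_X1_self p), crossS_Jm_X1 hp]
  conv_lhs => rw [eq_sum_inner_smul_frame hp (c p)]
  rw [real_inner_comm p (c p), hc.1.2 p hp, zero_smul, zero_add]

def X1CLM : E4 →L[ℝ] E4 := LinearMap.toContinuousLinearMap
  { toFun := X1
    map_add' := fun x y => by ext i; fin_cases i <;> simp [X1] <;> ring
    map_smul' := fun c x => by ext i; fin_cases i <;> simp [X1] }

def X2CLM : E4 →L[ℝ] E4 := LinearMap.toContinuousLinearMap
  { toFun := X2
    map_add' := fun x y => by ext i; fin_cases i <;> simp [X2] <;> ring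
    map_smul' := fun c x => by ext i; fin_cases i <;> simp [X2] }

theorem fderiv_abField_apply (a₁ a₂ : ℝ) (p v : E4) :
    fderiv ℝ (abField a₁ a₂) p v =
      (2 * a₁ * (v 0 * p 3 + p 0 * v 3 + v 1 * p 2 + p 1 * v 2)) • X1 p
        + (2 * a₁ * (p 0 * p 3 + p 1 * p 2)) • X1 v
        + (2 * a₂ * (v 0 * p 2 + p 0 * v 2 - v 1 * p 3 - p 1 * v 3)) • X2 p
        + (2 * a₂ * (p 0 * p 2 - p 1 * p 3)) • X2 v := by
  have hx (i : Fin 4) : HasFDerivAt (fun q : E4 => q i) (EuclideanSpace.proj i : E4 →L[ℝ] ℝ) p :=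
    (EuclideanSpace.proj i : E4 →L[ℝ] ℝ).hasFDerivAt
  have H : HasFDerivAt (abField a₁ a₂) _ p :=
    (((((hx 0).mul (hx 3)).add ((hx 1).mul (hx 2))).const_mul (2 * a₁)).smul
      X1CLM.hasFDerivAt).add
    (((((hx 0).mul (hx 2)).sub ((hx 1).mul (hx 3))).const_mul (2 * a₂)).smul
      X2CLM.hasFDerivAt)
  rw [H.fderiv]
  simp [X1CLM, X2CLM]
  module

theorem dFlat_abField_X1_X2 (a₁ a₂ : ℝ) {p : E4} (hp : ‖p‖ = 1) :
    dFlat (abField a₁ a₂) p (X1 p) (X2 p) =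
      2 * (a₁ - a₂) * (p 2 ^ 2 + p 3 ^ 2 - p 0 ^ 2 - p 1 ^ 2) := by
  simp [dFlat, fderiv_abField_apply, inner_eq, X1, X2]
  linear_combination 2 * (a₁ - a₂) * (p 2 ^ 2 + p 3 ^ 2 - p 0 ^ 2 - p 1 ^ 2) * sum_sq_eq_one hp

theorem dFlat_abField_X2_Jm (a₁ a₂ : ℝ) {p : E4} (hp : ‖p‖ = 1) :
    dFlat (abField a₁ a₂) p (X2 p) (Jm p) = 4 * (a₁ + a₂) * (p 0 * p 3 + p 1 * p 2) := by
  simp [dFlat, fderiv_abField_apply, inner_eq, X1, X2, Jm]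
  linear_combination 4 * (a₁ + a₂) * (p 0 * p 3 + p 1 * p 2) * sum_sq_eq_one hp

theorem dFlat_abField_Jm_X1 (a₁ a₂ : ℝ) {p : E4} (hp : ‖p‖ = 1) :
    dFlat (abField a₁ a₂) p (Jm p) (X1 p) = 4 * (a₁ + a₂) * (p 0 * p 2 - p 1 * p 3) := by
  simp [dFlat, fderiv_abField_apply, inner_eq, X1, X2, Jm]
  linear_combination 4 * (a₁ + a₂) * (p 0 * p 2 - p 1 * p 3) * sum_sq_eq_one hp

theorem IsCurlOf.abField_apply {a₁ a₂ : ℝ} {c : E4 → E4} (hc : IsCurlOf (abField a₁ a₂) c)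
    {p : E4} (hp : ‖p‖ = 1) :
    c p = (2 * (a₁ - a₂) * (p 2 ^ 2 + p 3 ^ 2 - p 0 ^ 2 - p 1 ^ 2)) • Jm p
      + (4 * (a₁ + a₂) * (p 0 * p 3 + p 1 * p 2)) • X1 p
      + (4 * (a₁ + a₂) * (p 0 * p 2 - p 1 * p 3)) • X2 p := by
  rw [hc.eq_frame hp, dFlat_abField_X1_X2 a₁ a₂ hp, dFlat_abField_X2_Jm a₁ a₂ hp,
    dFlat_abField_Jm_X1 a₁ a₂ hp]

theorem abField_single_zero (a₁ a₂ : ℝ) : abField a₁ a₂ (EuclideanSpace.single 0 1) = 0 := by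
  ext i; fin_cases i <;> simp [abField, X1, X2]

/-- for `u = 2a₁(x₁y₂+y₁x₂)X₁ + 2a₂(x₁x₂−y₁y₂)X₂`: if `a₁ = a₂` then
`curl u = 4u` on S³ (strong Beltrami field); conversely if `(a₁,a₂) ≠ (0,0)` and
`curl u = θ·u` on S³ for some smooth function `θ`, then `a₁ = a₂`. -/
theorem statement16 (a₁ a₂ : ℝ) :
    (a₁ = a₂ →
      ∀ c : E4 → E4, IsCurlOf (abField a₁ a₂) c →
        ∀ p : E4, ‖p‖ = 1 → c p = (4 : ℝ) • abField a₁ a₂ p) ∧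
    ((a₁, a₂) ≠ (0, 0) →
      ∀ c : E4 → E4, IsCurlOf (abField a₁ a₂) c →
        (∃ θ : E4 → ℝ, ContDiff ℝ (⊤ : ℕ∞) θ ∧
          ∀ p : E4, ‖p‖ = 1 → c p = θ p • abField a₁ a₂ p) →
        a₁ = a₂) := by
  constructor
  · rintro rfl c hc p hp
    rw [hc.abField_apply hp, abField]
    module
  · rintro - c hc ⟨θ, -, hθ⟩
    set e : E4 := EuclideanSpace.single 0 1
    have he : ‖e‖ = 1 := by simp [e]
    have hce : c e = 0 := by rw [hθ e he, abField_single_zero, smul_zero]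
    have h := congrArg (· 1) ((hc.abField_apply he).symm.trans hce)
    simp [e, Jm, X1, X2] at h
    linarith
end
end
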